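/- Safety First implies violation of continuity: suppose ≿ on Δ(O) is complete and transitive, satisfies Safety First with respect to o†, and there exist safe lotteries p, q with p ≻ q. Then continuity fails: there is no α in [0,1] such that α p + (1−α) o† is indifferent to q. -/

import Mathlib

variable {O : Type*} [Fintype O] [DecidableEq O]

/-- A lottery: a probability distribution on the finite outcome set `O`. -/
def IsLottery (p : O → ℝ) : Prop := (∀ o, 0 ≤ p o) ∧ ∑ o, p o = 1

/-- The Dirac lottery concentrated at outcome `o`. -/
def dirac (o : O) : O → ℝ := fun o' => if o' = o then 1 else 0

/-- Indifference induced by a preference relation. -/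
def Indiff (pref : (O → ℝ) → (O → ℝ) → Prop) (p q : O → ℝ) : Prop :=
  pref p q ∧ pref q p

/-- A safe outcome: one not indifferent to the unsafe outcome `odag`. -/
def SafeOutcome (pref : (O → ℝ) → (O → ℝ) → Prop) (odag : O) (o : O) : Prop :=
  ¬ Indiff pref (dirac o) (dirac odag)

/-- A lottery supported on safe outcomes. -/
def SafeLottery (pref : (O → ℝ) → (O → ℝ) → Prop) (odag : O) (p : O → ℝ) : Prop :=
  IsLottery p ∧ ∀ o, ¬ SafeOutcome pref odag o → p o = 0

def SafetyFirst (pref : (O → ℝ) → (O → ℝ) → Prop) (odag : O) : Prop :=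
  ∀ p q : O → ℝ, SafeLottery pref odag p → SafeLottery pref odag q →
    ∀ ε : ℝ, 0 < ε → ε ≤ 1 → ¬ pref (ε • dirac odag + (1 - ε) • p) q

theorem SafetyFirst.not_pref_mix {pref : (O → ℝ) → (O → ℝ) → Prop} {odag : O}
    (hsafety : SafetyFirst pref odag) {p q : O → ℝ} (hp : SafeLottery pref odag p)
    (hq : SafeLottery pref odag q) {α : ℝ} (hα₀ : 0 ≤ α) (hα₁ : α < 1) :
    ¬ pref (α • p + (1 - α) • dirac odag) q := by
  have hmix : α • p + (1 - α) • dirac odag = (1 - α) • dirac odag + (1 - (1 - α)) • p := by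
    rw [sub_sub_cancel, add_comm]
  rw [hmix]
  exact hsafety p q hp hq (1 - α) (by linarith) (by linarith)

theorem stmt_18_general (odag : O) (pref : (O → ℝ) → (O → ℝ) → Prop)
    (hsafety : ∀ p q : O → ℝ, SafeLottery pref odag p → SafeLottery pref odag q →
      ∀ ε : ℝ, 0 < ε → ε ≤ 1 → ¬ pref (ε • dirac odag + (1 - ε) • p) q)
    (p q : O → ℝ) (hp : SafeLottery pref odag p) (hq : SafeLottery pref odag q)
    (hstrict : pref p q ∧ ¬ pref q p) :
    ∀ α : ℝ, 0 ≤ α → α ≤ 1 →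
      ¬ Indiff pref (α • p + (1 - α) • dirac odag) q := by
  intro α hα₀ hα₁ hindiff
  rcases hα₁.lt_or_eq with hα₁ | rfl
  · exact SafetyFirst.not_pref_mix hsafety hp hq hα₀ hα₁ hindiff.1
  · rw [one_smul, sub_self, zero_smul, add_zero] at hindiff
    exact hstrict.2 hindiff.2

/-- Safety First implies violation of continuity: if `p ≻ q` are safe
lotteries, then no mixture `α p + (1-α) o†` with `α ∈ [0,1]` is indifferent
to `q`. -/
theorem stmt_18 (odag : O) (pref : (O → ℝ) → (O → ℝ) → Prop)
    (hcomplete : ∀ p q : O → ℝ, IsLottery p → IsLottery q → pref p q ∨ pref q p)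
    (htrans : ∀ p q r : O → ℝ, IsLottery p → IsLottery q → IsLottery r →
      pref p q → pref q r → pref p r)
    (hsafety : ∀ p q : O → ℝ, SafeLottery pref odag p → SafeLottery pref odag q →
      ∀ ε : ℝ, 0 < ε → ε ≤ 1 → ¬ pref (ε • dirac odag + (1 - ε) • p) q)
    (p q : O → ℝ) (hp : SafeLottery pref odag p) (hq : SafeLottery pref odag q)
    (hstrict : pref p q ∧ ¬ pref q p) :
    ∀ α : ℝ, 0 ≤ α → α ≤ 1 →
      ¬ Indiff pref (α • p + (1 - α) • dirac odag) q :=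
  stmt_18_general odag pref hsafety p q hp hq hstrict
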